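/- arXiv:1506.06402 — 3 statements merged into one kernel-verified Lean document; each statement's English description precedes it below -/
import Mathlib

section
/- For a Fock-space construction F and a natural transformation η_A : A → FA, the composite Δ̄_A ∘ η_A : A → FA ⊗ FA equals the sum of (η_A ⊗ η̄_A) ∘ ρ⁻¹_A and (η̄_A ⊗ η_A) ∘ λ⁻¹_A, where λ and ρ are the unitors of ⊗. -/
open CategoryTheory CategoryTheory.Limits CategoryTheory.MonoidalCategory ZeroObject

universe v u

variable (C : Type u) [Category.{v} C] [HasZeroObject C] [HasZeroMorphisms C]
  [HasBinaryBiproducts C] [MonoidalCategory C] [SymmetricCategory C]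

/-- The diagonal `Δ_A = ⟨id, id⟩ : A ⟶ A ⊞ A`. -/
noncomputable abbrev bdiag (A : C) : A ⟶ A ⊞ A := biprod.lift (𝟙 A) (𝟙 A)

/-- The codiagonal `∇_A = [id, id] : A ⊞ A ⟶ A`. -/
noncomputable abbrev bcodiag (A : C) : A ⊞ A ⟶ A := biprod.desc (𝟙 A) (𝟙 A)

variable {C}

/-- Convolution addition of morphisms induced by the biproduct structure:
`f + g = ∇_B ∘ (f ⊞ g) ∘ Δ_A`. -/
noncomputable def cadd {A B : C} (f g : A ⟶ B) : A ⟶ B :=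
  bdiag C A ≫ biprod.map f g ≫ bcodiag C B

variable (C)

/-- Compatibility of the biproduct structure and the symmetric monoidal
structure: the tensor product is bilinear for the biproduct (convolution)
enrichment.  A category carrying both compatible structures is a category of
spaces and linear maps. -/
class TensorCompatible : Prop where
  zero_tensorHom : ∀ {A B X Y : C} (f : X ⟶ Y), (0 : A ⟶ B) ⊗ₘ f = 0
  tensorHom_zero : ∀ {A B X Y : C} (f : X ⟶ Y), f ⊗ₘ (0 : A ⟶ B) = 0
  cadd_tensorHom : ∀ {A B X Y : C} (f g : A ⟶ B) (h : X ⟶ Y),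
    cadd f g ⊗ₘ h = cadd (f ⊗ₘ h) (g ⊗ₘ h)
  tensorHom_cadd : ∀ {A B X Y : C} (f g : A ⟶ B) (h : X ⟶ Y),
    h ⊗ₘ cadd f g = cadd (h ⊗ₘ f) (h ⊗ₘ g)

/-- A (bosonic) Fock-space construction on a category of spaces and linear
maps: a strong symmetric monoidal functor from the biproduct monoidal
structure `(0, ⊞)` to the symmetric monoidal structure `(𝟙_ C, ⊗)`. -/
structure FockConstruction where
  /-- The underlying functor. -/
  F : C ⥤ C
  /-- The unit comparison isomorphism `I ≅ F 0`. -/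
  φ₀ : 𝟙_ C ≅ F.obj (0 : C)
  /-- The tensor comparison isomorphism `F A ⊗ F B ≅ F (A ⊞ B)`. -/
  φ : ∀ A B : C, F.obj A ⊗ F.obj B ≅ F.obj (A ⊞ B)
  φ_natural : ∀ {A B A' B' : C} (f : A ⟶ A') (g : B ⟶ B'),
    (F.map f ⊗ₘ F.map g) ≫ (φ A' B').hom = (φ A B).hom ≫ F.map (biprod.map f g)
  left_unitality : ∀ A : C,
    (φ₀.hom ⊗ₘ 𝟙 (F.obj A)) ≫ (φ 0 A).hom ≫ F.map (biprod.desc 0 (𝟙 A)) =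
      (λ_ (F.obj A)).hom
  right_unitality : ∀ A : C,
    (𝟙 (F.obj A) ⊗ₘ φ₀.hom) ≫ (φ A 0).hom ≫ F.map (biprod.desc (𝟙 A) 0) =
      (ρ_ (F.obj A)).hom
  associativity : ∀ A B D : C,
    ((φ A B).hom ⊗ₘ 𝟙 (F.obj D)) ≫ (φ (A ⊞ B) D).hom ≫
        F.map (biprod.associator A B D).hom =
      (α_ (F.obj A) (F.obj B) (F.obj D)).hom ≫
        (𝟙 (F.obj A) ⊗ₘ (φ B D).hom) ≫ (φ A (B ⊞ D)).hom
  braided : ∀ A B : C,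
    (φ A B).hom ≫ F.map (biprod.braiding A B).hom =
      (β_ (F.obj A) (F.obj B)).hom ≫ (φ B A).hom

namespace FockConstruction

variable {C} (Φ : FockConstruction C)

/-- The unit `η̄_A : I ⟶ F A` of the Fock bialgebra. -/
noncomputable def unit (A : C) : 𝟙_ C ⟶ Φ.F.obj A :=
  Φ.φ₀.hom ≫ Φ.F.map (0 : (0 : C) ⟶ A)

/-- The multiplication `∇̄_A : F A ⊗ F A ⟶ F A` of the Fock bialgebra. -/
noncomputable def mult (A : C) : Φ.F.obj A ⊗ Φ.F.obj A ⟶ Φ.F.obj A :=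
  (Φ.φ A A).hom ≫ Φ.F.map (bcodiag C A)

/-- The counit `ε̄_A : F A ⟶ I` of the Fock bialgebra. -/
noncomputable def counit (A : C) : Φ.F.obj A ⟶ 𝟙_ C :=
  Φ.F.map (0 : A ⟶ (0 : C)) ≫ Φ.φ₀.inv

/-- The comultiplication `Δ̄_A : F A ⟶ F A ⊗ F A` of the Fock bialgebra. -/
noncomputable def comult (A : C) : Φ.F.obj A ⟶ Φ.F.obj A ⊗ Φ.F.obj A :=
  Φ.F.map (bdiag C A) ≫ (Φ.φ A A).inv

/-- The creation operator `a⁺ = ∇̄_A ∘ (η_A ⊗ id) : A ⊗ F A ⟶ F A` associated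
to a natural transformation `η : Id ⟶ F`. -/
noncomputable def creation (η : 𝟭 C ⟶ Φ.F) (A : C) : A ⊗ Φ.F.obj A ⟶ Φ.F.obj A :=
  (η.app A ⊗ₘ 𝟙 (Φ.F.obj A)) ≫ Φ.mult A

/-- The annihilation operator `a⁻ = (ε_A ⊗ id) ∘ Δ̄_A : F A ⟶ A ⊗ F A`
associated to a natural transformation `ε : F ⟶ Id`. -/
noncomputable def annihilation (ε : Φ.F ⟶ 𝟭 C) (A : C) :
    Φ.F.obj A ⟶ A ⊗ Φ.F.obj A :=
  Φ.comult A ≫ (ε.app A ⊗ₘ 𝟙 (Φ.F.obj A))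

end FockConstruction

/-!
By naturality of `η`, `Δ̄_A ∘ η_A = φ⁻¹ ∘ η_{A ⊞ A} ∘ Δ_A`, and precomposing with the diagonal
splits a map out of `A ⊞ A` into the convolution sum of its restrictions along `inl` and `inr`.
Naturality along the injections turns these into `φ⁻¹ ∘ F(inl) ∘ η_A` and `φ⁻¹ ∘ F(inr) ∘ η_A`.
Since `id ⊞ (0 : 0 ⟶ A) = inl ∘ [id, 0]`, naturality of `φ` and right unitality of `F` identify
`φ⁻¹ ∘ F(inl)` with `(id ⊗ η̄_A) ∘ ρ⁻¹`; symmetrically for `inr`.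
-/

theorem bdiag_comp_eq_cadd {C : Type u} [Category.{v} C] [HasZeroMorphisms C]
    [HasBinaryBiproducts C] {A B : C} (k : A ⊞ A ⟶ B) :
    bdiag C A ≫ k = cadd (biprod.inl ≫ k) (biprod.inr ≫ k) := by
  have hsplit : biprod.map (biprod.inl ≫ k) (biprod.inr ≫ k) ≫ bcodiag C B = k := by
    apply biprod.hom_ext' <;> simp
  rw [cadd, hsplit]

namespace FockConstruction

variable {C : Type u} [Category.{v} C] [HasZeroObject C] [HasZeroMorphisms C]
  [HasBinaryBiproducts C] [MonoidalCategory C] [SymmetricCategory C]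
  (Φ : FockConstruction C)

theorem whiskerLeft_unit_comp_φ_hom (B A : C) :
    (Φ.F.obj B ◁ Φ.unit A) ≫ (Φ.φ B A).hom = (ρ_ (Φ.F.obj B)).hom ≫ Φ.F.map biprod.inl := by
  have hinl : biprod.map (𝟙 B) (0 : (0 : C) ⟶ A) = biprod.desc (𝟙 B) 0 ≫ biprod.inl := by
    apply biprod.hom_ext' <;> simp
  calc (Φ.F.obj B ◁ Φ.unit A) ≫ (Φ.φ B A).hom
      = (𝟙 (Φ.F.obj B) ⊗ₘ Φ.φ₀.hom) ≫
          (Φ.F.map (𝟙 B) ⊗ₘ Φ.F.map (0 : (0 : C) ⟶ A)) ≫ (Φ.φ B A).hom := by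
        simp [unit]
    _ = (ρ_ (Φ.F.obj B)).hom ≫ Φ.F.map biprod.inl := by
        rw [Φ.φ_natural, hinl, Φ.F.map_comp, ← Φ.right_unitality, Category.assoc,
          Category.assoc]

theorem unit_whiskerRight_comp_φ_hom (A B : C) :
    (Φ.unit A ▷ Φ.F.obj B) ≫ (Φ.φ A B).hom = (λ_ (Φ.F.obj B)).hom ≫ Φ.F.map biprod.inr := by
  have hinr : biprod.map (0 : (0 : C) ⟶ A) (𝟙 B) = biprod.desc 0 (𝟙 B) ≫ biprod.inr := by
    apply biprod.hom_ext' <;> simp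
  calc (Φ.unit A ▷ Φ.F.obj B) ≫ (Φ.φ A B).hom
      = (Φ.φ₀.hom ⊗ₘ 𝟙 (Φ.F.obj B)) ≫
          (Φ.F.map (0 : (0 : C) ⟶ A) ⊗ₘ Φ.F.map (𝟙 B)) ≫ (Φ.φ A B).hom := by
        simp [unit]
    _ = (λ_ (Φ.F.obj B)).hom ≫ Φ.F.map biprod.inr := by
        rw [Φ.φ_natural, hinr, Φ.F.map_comp, ← Φ.left_unitality, Category.assoc,
          Category.assoc]

theorem map_inl_comp_φ_inv (B A : C) :
    Φ.F.map biprod.inl ≫ (Φ.φ B A).inv = (ρ_ (Φ.F.obj B)).inv ≫ (Φ.F.obj B ◁ Φ.unit A) := by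
  rw [Iso.comp_inv_eq, Category.assoc, whiskerLeft_unit_comp_φ_hom, Iso.inv_hom_id_assoc]

theorem map_inr_comp_φ_inv (A B : C) :
    Φ.F.map biprod.inr ≫ (Φ.φ A B).inv = (λ_ (Φ.F.obj B)).inv ≫ (Φ.unit A ▷ Φ.F.obj B) := by
  rw [Iso.comp_inv_eq, Category.assoc, unit_whiskerRight_comp_φ_hom, Iso.inv_hom_id_assoc]

theorem comp_map_inl_comp_φ_inv {X B : C} (f : X ⟶ Φ.F.obj B) (A : C) :
    f ≫ Φ.F.map biprod.inl ≫ (Φ.φ B A).inv = (ρ_ X).inv ≫ (f ⊗ₘ Φ.unit A) := by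
  rw [map_inl_comp_φ_inv, rightUnitor_inv_naturality_assoc, ← MonoidalCategory.tensorHom_def]

theorem comp_map_inr_comp_φ_inv {X B : C} (f : X ⟶ Φ.F.obj B) (A : C) :
    f ≫ Φ.F.map biprod.inr ≫ (Φ.φ A B).inv = (λ_ X).inv ≫ (Φ.unit A ⊗ₘ f) := by
  rw [map_inr_comp_φ_inv, leftUnitor_inv_naturality_assoc, ← MonoidalCategory.tensorHom_def']

end FockConstruction

theorem FockConstruction.comult_comp_eta_general {C : Type u} [Category.{v} C]
    [HasZeroObject C] [HasZeroMorphisms C] [HasBinaryBiproducts C]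
    [MonoidalCategory C] [SymmetricCategory C]
    (Φ : FockConstruction C) (η : 𝟭 C ⟶ Φ.F) (A : C) :
    η.app A ≫ Φ.comult A =
      cadd ((ρ_ A).inv ≫ (η.app A ⊗ₘ Φ.unit A))
        ((λ_ A).inv ≫ (Φ.unit A ⊗ₘ η.app A)) := by
  have hnat {X Y : C} (g : X ⟶ Y) : η.app X ≫ Φ.F.map g = g ≫ η.app Y :=
    (η.naturality g).symm
  calc η.app A ≫ Φ.comult A
      = bdiag C A ≫ η.app (A ⊞ A) ≫ (Φ.φ A A).inv := by
        rw [comult, ← Category.assoc, hnat, Category.assoc]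
    _ = cadd (biprod.inl ≫ η.app (A ⊞ A) ≫ (Φ.φ A A).inv)
          (biprod.inr ≫ η.app (A ⊞ A) ≫ (Φ.φ A A).inv) := bdiag_comp_eq_cadd _
    _ = _ := by
        rw [← Category.assoc biprod.inl, ← hnat, Category.assoc, comp_map_inl_comp_φ_inv,
          ← Category.assoc biprod.inr, ← hnat, Category.assoc, comp_map_inr_comp_φ_inv]

/-- For a Fock-space construction `F` and a natural transformation
`η : Id ⟶ F`, `Δ̄_A ∘ η_A = (η_A ⊗ η̄_A) ∘ ρ⁻¹_A + (η̄_A ⊗ η_A) ∘ λ⁻¹_A`. -/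
theorem FockConstruction.comult_comp_eta {C : Type u} [Category.{v} C]
    [HasZeroObject C] [HasZeroMorphisms C] [HasBinaryBiproducts C]
    [MonoidalCategory C] [SymmetricCategory C] [TensorCompatible C]
    (Φ : FockConstruction C) (η : 𝟭 C ⟶ Φ.F) (A : C) :
    η.app A ≫ Φ.comult A =
      cadd ((ρ_ A).inv ≫ (η.app A ⊗ₘ Φ.unit A))
        ((λ_ A).inv ≫ (Φ.unit A ⊗ₘ η.app A)) :=
  FockConstruction.comult_comp_eta_general Φ η A
end

section
/- For a Fock-space construction F with natural transformation ε_A : FA → A, the annihilation operator a⁻ = (ε_A ⊗ id_{FA}) ∘ Δ̄_A satisfies (id_A ⊗ a⁻) ∘ a⁻ = (σ_{A,A} ⊗ id_{FA}) ∘ (id_A ⊗ a⁻) ∘ a⁻ : FA → A ⊗ A ⊗ FA, i.e., annihilation operators commute with each other. -/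
open CategoryTheory CategoryTheory.Limits CategoryTheory.MonoidalCategory ZeroObject

universe v u

variable (C : Type u) [Category.{v} C] [HasZeroObject C] [HasZeroMorphisms C]
  [HasBinaryBiproducts C] [MonoidalCategory C] [SymmetricCategory C]

variable {C}

variable (C)

/-!
The comultiplication `Δ̄_A = φ⁻¹ ∘ F(Δ_A)` inherits coassociativity and cocommutativity from the
biproduct diagonal `Δ_A`, through the associativity and symmetry of `F`. By coassociativity,
`(id ⊗ a⁻) ∘ a⁻` equals `(((ε ⊗ ε) ∘ Δ̄) ⊗ id) ∘ Δ̄` up to an associator, and by cocommutativity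
`(ε ⊗ ε) ∘ Δ̄` is invariant under `σ`.
-/

namespace CategoryTheory.MonoidalCategory

variable {D : Type*} [Category D] [MonoidalCategory D]

lemma comp_whiskerRight_comp_whiskerLeft_of_coassoc {X A : D} (Δ : X ⟶ X ⊗ X)
    (coassoc : Δ ≫ X ◁ Δ ≫ (α_ X X X).inv = Δ ≫ Δ ▷ X) (e : X ⟶ A) :
    Δ ≫ e ▷ X ≫ A ◁ (Δ ≫ e ▷ X) ≫ (α_ A A X).inv = Δ ≫ (Δ ≫ (e ⊗ₘ e)) ▷ X := by
  calc Δ ≫ e ▷ X ≫ A ◁ (Δ ≫ e ▷ X) ≫ (α_ A A X).inv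
      = (Δ ≫ X ◁ Δ ≫ (α_ X X X).inv) ≫ (e ⊗ₘ e) ▷ X := by
        simp only [whiskerLeft_comp, Category.assoc, ← whisker_exchange_assoc,
          associator_inv_naturality_middle, associator_inv_naturality_left_assoc,
          MonoidalCategory.tensorHom_def, comp_whiskerRight]
    _ = Δ ≫ (Δ ≫ (e ⊗ₘ e)) ▷ X := by rw [coassoc, Category.assoc, comp_whiskerRight]

lemma comp_whiskerRight_comp_whiskerLeft_comm [BraidedCategory D] {X A : D} (Δ : X ⟶ X ⊗ X)
    (coassoc : Δ ≫ X ◁ Δ ≫ (α_ X X X).inv = Δ ≫ Δ ▷ X) (cocomm : Δ ≫ (β_ X X).hom = Δ)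
    (e : X ⟶ A) :
    Δ ≫ e ▷ X ≫ A ◁ (Δ ≫ e ▷ X) =
      Δ ≫ e ▷ X ≫ A ◁ (Δ ≫ e ▷ X) ≫ (α_ A A X).inv ≫ (β_ A A).hom ▷ X ≫ (α_ A A X).hom := by
  have cocomm_e : Δ ≫ (e ⊗ₘ e) ≫ (β_ A A).hom = Δ ≫ (e ⊗ₘ e) := by
    rw [BraidedCategory.braiding_naturality, reassoc_of% cocomm]
  rw [← cancel_mono (α_ A A X).inv]
  simp only [Category.assoc, Iso.hom_inv_id, Category.comp_id]
  rw [comp_whiskerRight_comp_whiskerLeft_of_coassoc Δ coassoc e,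
    reassoc_of% comp_whiskerRight_comp_whiskerLeft_of_coassoc Δ coassoc e,
    ← comp_whiskerRight, Category.assoc, cocomm_e]

end CategoryTheory.MonoidalCategory

section Biproduct

variable {𝒞 : Type*} [Category 𝒞] [HasZeroMorphisms 𝒞] [HasBinaryBiproducts 𝒞]

lemma bdiag_comp_braiding (A : 𝒞) : bdiag 𝒞 A ≫ (biprod.braiding A A).hom = bdiag 𝒞 A := by
  ext <;> simp

lemma bdiag_comp_map_bdiag (A : 𝒞) :
    bdiag 𝒞 A ≫ biprod.map (𝟙 A) (bdiag 𝒞 A) =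
      bdiag 𝒞 A ≫ biprod.map (bdiag 𝒞 A) (𝟙 A) ≫ (biprod.associator A A A).hom := by
  ext <;> simp

end Biproduct

namespace FockConstruction

variable {C} (Φ : FockConstruction C)

lemma φ_inv_natural {A B A' B' : C} (f : A ⟶ A') (g : B ⟶ B') :
    (Φ.φ A B).inv ≫ (Φ.F.map f ⊗ₘ Φ.F.map g) = Φ.F.map (biprod.map f g) ≫ (Φ.φ A' B').inv := by
  rw [Iso.inv_comp_eq, ← reassoc_of% Φ.φ_natural, Iso.hom_inv_id, Category.comp_id]

lemma φ_inv_whiskerLeft {A B B' : C} (g : B ⟶ B') :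
    (Φ.φ A B).inv ≫ Φ.F.obj A ◁ Φ.F.map g = Φ.F.map (biprod.map (𝟙 A) g) ≫ (Φ.φ A B').inv := by
  simpa using Φ.φ_inv_natural (𝟙 A) g

lemma φ_inv_whiskerRight {A A' B : C} (f : A ⟶ A') :
    (Φ.φ A B).inv ≫ Φ.F.map f ▷ Φ.F.obj B = Φ.F.map (biprod.map f (𝟙 B)) ≫ (Φ.φ A' B).inv := by
  simpa using Φ.φ_inv_natural f (𝟙 B)

lemma φ_inv_braiding (A B : C) :
    (Φ.φ A B).inv ≫ (β_ (Φ.F.obj A) (Φ.F.obj B)).hom =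
      Φ.F.map (biprod.braiding A B).hom ≫ (Φ.φ B A).inv := by
  rw [Iso.inv_comp_eq, reassoc_of% Φ.braided, Iso.hom_inv_id, Category.comp_id]

lemma associativity_inv (A B D : C) :
    Φ.F.map (biprod.associator A B D).hom ≫ (Φ.φ A (B ⊞ D)).inv ≫
        Φ.F.obj A ◁ (Φ.φ B D).inv ≫ (α_ (Φ.F.obj A) (Φ.F.obj B) (Φ.F.obj D)).inv =
      (Φ.φ (A ⊞ B) D).inv ≫ (Φ.φ A B).inv ▷ Φ.F.obj D := by
  rw [← cancel_epi (Φ.φ (A ⊞ B) D).hom, ← cancel_epi (whiskerRightIso (Φ.φ A B) (Φ.F.obj D)).hom]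
  have h := Φ.associativity A B D
  simp only [tensorHom_id, id_tensorHom] at h
  simp only [whiskerRightIso_hom, reassoc_of% h, Iso.hom_inv_id_assoc,
    whiskerLeft_hom_inv_assoc, Iso.hom_inv_id, hom_inv_whiskerRight]

lemma comult_braiding (A : C) :
    Φ.comult A ≫ (β_ (Φ.F.obj A) (Φ.F.obj A)).hom = Φ.comult A := by
  rw [comult, Category.assoc, φ_inv_braiding, ← Φ.F.map_comp_assoc, bdiag_comp_braiding]

lemma comult_coassoc (A : C) :
    Φ.comult A ≫ Φ.F.obj A ◁ Φ.comult A ≫ (α_ (Φ.F.obj A) (Φ.F.obj A) (Φ.F.obj A)).inv =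
      Φ.comult A ≫ Φ.comult A ▷ Φ.F.obj A := by
  calc Φ.comult A ≫ Φ.F.obj A ◁ Φ.comult A ≫ (α_ (Φ.F.obj A) (Φ.F.obj A) (Φ.F.obj A)).inv
      = Φ.F.map (bdiag C A) ≫ Φ.F.map (biprod.map (𝟙 A) (bdiag C A)) ≫ (Φ.φ A (A ⊞ A)).inv ≫
          Φ.F.obj A ◁ (Φ.φ A A).inv ≫ (α_ (Φ.F.obj A) (Φ.F.obj A) (Φ.F.obj A)).inv := by
        simp only [comult, whiskerLeft_comp, Category.assoc, reassoc_of% φ_inv_whiskerLeft]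
    _ = Φ.F.map (bdiag C A) ≫ Φ.F.map (biprod.map (bdiag C A) (𝟙 A)) ≫ (Φ.φ (A ⊞ A) A).inv ≫
          (Φ.φ A A).inv ▷ Φ.F.obj A := by
        rw [← Φ.F.map_comp_assoc, bdiag_comp_map_bdiag, Functor.map_comp, Functor.map_comp,
          Category.assoc, Category.assoc, associativity_inv]
    _ = Φ.comult A ≫ Φ.comult A ▷ Φ.F.obj A := by
        simp only [comult, comp_whiskerRight, Category.assoc, reassoc_of% φ_inv_whiskerRight]

end FockConstruction

theorem FockConstruction.annihilation_commute_general {C : Type u} [Category.{v} C]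
    [HasZeroObject C] [HasZeroMorphisms C] [HasBinaryBiproducts C]
    [MonoidalCategory C] [SymmetricCategory C]
    (Φ : FockConstruction C) (ε : Φ.F ⟶ 𝟭 C) (A : C) :
    Φ.annihilation ε A ≫ (𝟙 A ⊗ₘ Φ.annihilation ε A) =
      Φ.annihilation ε A ≫ (𝟙 A ⊗ₘ Φ.annihilation ε A) ≫
        (α_ A A (Φ.F.obj A)).inv ≫ ((β_ A A).hom ⊗ₘ 𝟙 (Φ.F.obj A)) ≫
        (α_ A A (Φ.F.obj A)).hom := by
  simp only [annihilation, id_tensorHom, tensorHom_id, Category.assoc]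
  exact comp_whiskerRight_comp_whiskerLeft_comm _ (Φ.comult_coassoc A) (Φ.comult_braiding A) _

/-- Annihilation operators commute with each other:
`(id ⊗ a⁻) ∘ a⁻ = (σ_{A,A} ⊗ id) ∘ (id ⊗ a⁻) ∘ a⁻` (associators inserted). -/
theorem FockConstruction.annihilation_commute {C : Type u} [Category.{v} C]
    [HasZeroObject C] [HasZeroMorphisms C] [HasBinaryBiproducts C]
    [MonoidalCategory C] [SymmetricCategory C] [TensorCompatible C]
    (Φ : FockConstruction C) (ε : Φ.F ⟶ 𝟭 C) (A : C) :
    Φ.annihilation ε A ≫ (𝟙 A ⊗ₘ Φ.annihilation ε A) =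
      Φ.annihilation ε A ≫ (𝟙 A ⊗ₘ Φ.annihilation ε A) ≫
        (α_ A A (Φ.F.obj A)).inv ≫ ((β_ A A).hom ⊗ₘ 𝟙 (Φ.F.obj A)) ≫
        (α_ A A (Φ.F.obj A)).hom :=
  FockConstruction.annihilation_commute_general Φ ε A
end

section
/- For a Fock-space construction F with natural transformations η and ε, the creation operator a⁺ = ∇̄_A ∘ (η_A ⊗ id_{FA}) satisfies ε̄_A ∘ a⁺ = 0 : A ⊗ FA → I, and the annihilation operator a⁻ = (ε_A ⊗ id_{FA}) ∘ Δ̄_A satisfies a⁻ ∘ η̄_A = 0 : I → A ⊗ FA. -/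
open CategoryTheory CategoryTheory.Limits CategoryTheory.MonoidalCategory ZeroObject

universe v u

variable (C : Type u) [Category.{v} C] [HasZeroObject C] [HasZeroMorphisms C]
  [HasBinaryBiproducts C] [MonoidalCategory C] [SymmetricCategory C]

variable {C}

variable (C)

/-! The counit `ε̄_A` is `F` applied to `A ⟶ 0` and the unit `η̄_A` is `F` applied to `0 ⟶ A`.
Since `∇̄` and `Δ̄` are natural, `ε̄_A ∘ a⁺` factors through `(η_A ≫ F 0) ⊗ F 0`, and
`η_A ≫ F 0 = 0 ≫ η_0 = 0` by naturality of `η`; dually `a⁻ ∘ η̄_A` factors through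
`(F 0 ≫ ε_A) ⊗ F 0` with `F 0 ≫ ε_A = 0`. The tensor product of a zero map is zero. -/

theorem CategoryTheory.NatTrans.app_comp_map_zero {C : Type*} [Category C] [HasZeroMorphisms C]
    {G : C ⥤ C} (η : 𝟭 C ⟶ G) (A B : C) : η.app A ≫ G.map (0 : A ⟶ B) = 0 := by
  rw [← η.naturality]
  exact zero_comp

theorem CategoryTheory.NatTrans.map_zero_comp_app {C : Type*} [Category C] [HasZeroMorphisms C]
    {G : C ⥤ C} (ε : G ⟶ 𝟭 C) (A B : C) : G.map (0 : A ⟶ B) ≫ ε.app B = 0 := by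
  rw [ε.naturality]
  exact comp_zero

namespace FockConstruction

variable {C} (Φ : FockConstruction C)

theorem mult_naturality {A B : C} (f : A ⟶ B) :
    Φ.mult A ≫ Φ.F.map f = (Φ.F.map f ⊗ₘ Φ.F.map f) ≫ Φ.mult B := by
  have : bcodiag C A ≫ f = biprod.map f f ≫ bcodiag C B := by ext <;> simp
  rw [mult, mult, Category.assoc, ← Φ.F.map_comp, this, Φ.F.map_comp,
    ← Category.assoc, ← Φ.φ_natural, Category.assoc]

theorem comult_naturality {A B : C} (f : A ⟶ B) :
    Φ.F.map f ≫ Φ.comult B = Φ.comult A ≫ (Φ.F.map f ⊗ₘ Φ.F.map f) := by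
  have : f ≫ bdiag C B = bdiag C A ≫ biprod.map f f := by ext <;> simp
  rw [comult, comult, ← Φ.F.map_comp_assoc, this, Φ.F.map_comp_assoc, Category.assoc]
  congr 1
  rw [Iso.comp_inv_eq, Category.assoc, Φ.φ_natural, Iso.inv_hom_id_assoc]

theorem creation_comp_counit [TensorCompatible C] (η : 𝟭 C ⟶ Φ.F) (A : C) :
    Φ.creation η A ≫ Φ.counit A = 0 := by
  rw [creation, counit, Category.assoc, ← Category.assoc (Φ.mult A), mult_naturality,
    ← Category.assoc, ← Category.assoc, tensorHom_comp_tensorHom, η.app_comp_map_zero,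
    TensorCompatible.zero_tensorHom, zero_comp, zero_comp]

theorem unit_comp_annihilation [TensorCompatible C] (ε : Φ.F ⟶ 𝟭 C) (A : C) :
    Φ.unit A ≫ Φ.annihilation ε A = 0 := by
  rw [unit, annihilation, Category.assoc, ← Category.assoc (Φ.F.map 0), comult_naturality,
    Category.assoc, tensorHom_comp_tensorHom, ε.map_zero_comp_app,
    TensorCompatible.zero_tensorHom, comp_zero, comp_zero]

end FockConstruction

/-- For a Fock-space construction, the creation operator is annihilated by the
counit, `ε̄_A ∘ a⁺ = 0`, and the annihilation operator kills the unit,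
`a⁻ ∘ η̄_A = 0`. -/
theorem FockConstruction.counit_creation_and_annihilation_unit {C : Type u}
    [Category.{v} C] [HasZeroObject C] [HasZeroMorphisms C]
    [HasBinaryBiproducts C] [MonoidalCategory C] [SymmetricCategory C]
    [TensorCompatible C] (Φ : FockConstruction C) (η : 𝟭 C ⟶ Φ.F)
    (ε : Φ.F ⟶ 𝟭 C) (A : C) :
    Φ.creation η A ≫ Φ.counit A = 0 ∧
    Φ.unit A ≫ Φ.annihilation ε A = 0 :=
  ⟨Φ.creation_comp_counit η A, Φ.unit_comp_annihilation ε A⟩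
end
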